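/- arXiv:1006.3891 — 2 statements merged into one kernel-verified Lean document; each statement's English description precedes it below -/
import Mathlib

section
/- Let u : ℝ × ℝ³ → ℝ³ be twice continuously differentiable, θ, q : ℝ × ℝ³ → ℝ twice continuously differentiable, and Q : ℝ → ℝ twice continuously differentiable. Suppose Dθ/Dt = 0 and ∂q/∂t + u·∇q + q div u = 0 everywhere. Then the vector field B := ∇Q(q) × ∇θ satisfies the stretching equation ∂B/∂t − curl(u × B) = −∇(q Q′(q) div u) × ∇θ everywhere. -/
open scoped BigOperators

noncomputable section

/-- Points of space-time: `(t, x)` with `x : Fin 3 → ℝ`. -/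
abbrev Pt := ℝ × (Fin 3 → ℝ)

/-- Spatial partial derivative in the `j`-th coordinate direction. -/
noncomputable def pd {E : Type*} [NormedAddCommGroup E] [NormedSpace ℝ E]
    (F : Pt → E) (j : Fin 3) (p : Pt) : E :=
  fderiv ℝ F p (0, Pi.single j 1)

/-- Partial time derivative. -/
noncomputable def pt {E : Type*} [NormedAddCommGroup E] [NormedSpace ℝ E]
    (F : Pt → E) (p : Pt) : E :=
  fderiv ℝ F p (1, 0)

/-- Material derivative `DF/Dt = ∂F/∂t + (u·∇)F`. -/
noncomputable def matD {E : Type*} [NormedAddCommGroup E] [NormedSpace ℝ E]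
    (u : Pt → Fin 3 → ℝ) (F : Pt → E) (p : Pt) : E :=
  pt F p + ∑ j, u p j • pd F j p

/-- Spatial gradient of a scalar field. -/
noncomputable def grad (f : Pt → ℝ) (p : Pt) : Fin 3 → ℝ := fun j => pd f j p

/-- `(B·∇)u`, with `i`-th component `∑ j, B j * ∂u_i/∂x_j`. -/
noncomputable def vecAdv (B u : Pt → Fin 3 → ℝ) (p : Pt) : Fin 3 → ℝ :=
  ∑ j, B p j • pd u j p

/-- Euclidean dot product on `ℝ³`. -/
noncomputable def dot3 (a b : Fin 3 → ℝ) : ℝ := ∑ i, a i * b i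

/-- Spatial divergence `div u = ∑ j, ∂u_j/∂x_j`. -/
noncomputable def div3 (u : Pt → Fin 3 → ℝ) (p : Pt) : ℝ := ∑ j, pd u j p j

/-- Spatial curl of a vector field. -/
noncomputable def curl3 (v : Pt → Fin 3 → ℝ) (p : Pt) : Fin 3 → ℝ :=
  ![pd v 1 p 2 - pd v 2 p 1, pd v 2 p 0 - pd v 0 p 2, pd v 0 p 1 - pd v 1 p 0]

/-- Cross product on `ℝ³`. -/
noncomputable def cross3 (a b : Fin 3 → ℝ) : Fin 3 → ℝ := crossProduct a b

/-! Write `g = Q ∘ q`. The two equations say that `θ` and `g` are transported by `u` up to a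
source: `∂ₜθ = -u·∇θ` and `∂ₜg = -u·∇g - w` with `w = q Q′(q) div u`, so
`∂ₜB = ∇(∂ₜg) × ∇θ + ∇g × ∇(∂ₜθ)`. On the other side, `u × (∇g × ∇θ) = (u·∇θ) ∇g - (u·∇g) ∇θ`
and `curl (a ∇f) = ∇a × ∇f`, whence `curl (u × B) = -(∇(u·∇g) × ∇θ + ∇g × ∇(u·∇θ))`. The
transport terms cancel and only `-∇w × ∇θ` is left. -/

section DirectionalDerivative

variable {E F : Type*} [NormedAddCommGroup E] [NormedSpace ℝ E]
  [NormedAddCommGroup F] [NormedSpace ℝ F]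

theorem ContDiffAt.differentiableAt_fderiv_apply {f : E → F} {x : E} (hf : ContDiffAt ℝ 2 f x)
    (v : E) : DifferentiableAt ℝ (fun y => fderiv ℝ f y v) x :=
  ((hf.fderiv_right one_add_one_eq_two.le).differentiableAt one_ne_zero).clm_apply
    (differentiableAt_const v)

theorem fderiv_fderiv_apply_comm {f : E → F} {x : E} (hf : ContDiffAt ℝ 2 f x) (v w : E) :
    fderiv ℝ (fun y => fderiv ℝ f y v) x w = fderiv ℝ (fun y => fderiv ℝ f y w) x v := by
  have hd : DifferentiableAt ℝ (fderiv ℝ f) x :=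
    (hf.fderiv_right one_add_one_eq_two.le).differentiableAt one_ne_zero
  rw [fderiv_clm_apply hd (differentiableAt_const v),
    fderiv_clm_apply hd (differentiableAt_const w)]
  simpa using hf.isSymmSndFDerivAt (by simp) w v

end DirectionalDerivative

section SpaceTime

variable {E : Type*} [NormedAddCommGroup E] [NormedSpace ℝ E] {F G : Pt → E} {p : Pt}

theorem pd_sub (hF : DifferentiableAt ℝ F p) (hG : DifferentiableAt ℝ G p) (j : Fin 3) :
    pd (fun q => F q - G q) j p = pd F j p - pd G j p := by
  simp [pd, fderiv_fun_sub hF hG]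

theorem pd_neg (j : Fin 3) : pd (fun q => -F q) j p = -pd F j p := by
  simp [pd, fderiv_fun_neg]

theorem pd_smul {a : Pt → ℝ} (ha : DifferentiableAt ℝ a p) (hF : DifferentiableAt ℝ F p)
    (j : Fin 3) : pd (fun q => a q • F q) j p = a p • pd F j p + pd a j p • F p := by
  simp [pd, fderiv_fun_smul ha hF]

theorem pt_sub (hF : DifferentiableAt ℝ F p) (hG : DifferentiableAt ℝ G p) :
    pt (fun q => F q - G q) p = pt F p - pt G p := by
  simp [pt, fderiv_fun_sub hF hG]

theorem pt_mul {a b : Pt → ℝ} (ha : DifferentiableAt ℝ a p) (hb : DifferentiableAt ℝ b p) :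
    pt (fun q => a q * b q) p = pt a p * b p + a p * pt b p := by
  simp only [pt, fderiv_fun_mul ha hb, add_apply, smul_apply, smul_eq_mul]
  ring

theorem pd_apply {V : Pt → Fin 3 → ℝ} (hV : DifferentiableAt ℝ V p) (j i : Fin 3) :
    pd V j p i = pd (fun q => V q i) j p := by
  simp [pd, fderiv_apply hV]

theorem pt_apply {V : Pt → Fin 3 → ℝ} (hV : DifferentiableAt ℝ V p) (i : Fin 3) :
    pt V p i = pt (fun q => V q i) p := by
  simp [pt, fderiv_apply hV]

end SpaceTime

section VectorCalculus

variable {p : Pt}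

theorem ContDiffAt.differentiableAt_grad {f : Pt → ℝ} (hf : ContDiffAt ℝ 2 f p) :
    DifferentiableAt ℝ (grad f) p :=
  differentiableAt_pi.2 fun _ => hf.differentiableAt_fderiv_apply _

theorem DifferentiableAt.dot3 {V W : Pt → Fin 3 → ℝ} (hV : DifferentiableAt ℝ V p)
    (hW : DifferentiableAt ℝ W p) : DifferentiableAt ℝ (fun q => dot3 (V q) (W q)) p := by
  unfold _root_.dot3
  fun_prop

theorem grad_sub {f g : Pt → ℝ} (hf : DifferentiableAt ℝ f p) (hg : DifferentiableAt ℝ g p) :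
    grad (fun q => f q - g q) p = grad f p - grad g p :=
  funext fun j => pd_sub hf hg j

theorem grad_neg (f : Pt → ℝ) : grad (fun q => -f q) p = -grad f p :=
  funext fun j => pd_neg j

theorem pt_grad {f : Pt → ℝ} (hf : ContDiffAt ℝ 2 f p) : pt (grad f) p = grad (pt f) p := by
  ext i
  rw [pt_apply hf.differentiableAt_grad]
  exact fderiv_fderiv_apply_comm hf _ _

theorem pt_cross3 {V W : Pt → Fin 3 → ℝ} (hV : DifferentiableAt ℝ V p)
    (hW : DifferentiableAt ℝ W p) :
    pt (fun q => cross3 (V q) (W q)) p = cross3 (pt V p) (W p) + cross3 (V p) (pt W p) := by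
  have hd : DifferentiableAt ℝ (fun q => cross3 (V q) (W q)) p := by
    refine differentiableAt_pi.2 fun i => ?_
    fin_cases i <;>
    · simp only [cross3, cross_apply, Fin.isValue, Fin.zero_eta, Fin.mk_one, Fin.reduceFinMk,
        Matrix.cons_val_zero, Matrix.cons_val_one, Matrix.cons_val]
      fun_prop
  have hV' := differentiableAt_pi.1 hV
  have hW' := differentiableAt_pi.1 hW
  ext i
  rw [pt_apply hd]
  fin_cases i <;>
  · simp only [cross3, cross_apply, pt_apply hV, pt_apply hW, Pi.add_apply, Fin.isValue,
      Fin.zero_eta, Fin.mk_one, Fin.reduceFinMk, Matrix.cons_val_zero, Matrix.cons_val_one,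
      Matrix.cons_val]
    rw [pt_sub (by fun_prop) (by fun_prop), pt_mul (hV' _) (hW' _), pt_mul (hV' _) (hW' _)]
    ring

theorem curl3_sub {V W : Pt → Fin 3 → ℝ} (hV : DifferentiableAt ℝ V p)
    (hW : DifferentiableAt ℝ W p) :
    curl3 (fun q => V q - W q) p = curl3 V p - curl3 W p := by
  ext i
  fin_cases i <;>
  · simp only [curl3, pd_sub hV hW, Pi.sub_apply, Fin.isValue, Fin.zero_eta, Fin.mk_one,
      Fin.reduceFinMk, Matrix.cons_val_zero, Matrix.cons_val_one, Matrix.cons_val]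
    ring

theorem curl3_smul {a : Pt → ℝ} {V : Pt → Fin 3 → ℝ} (ha : DifferentiableAt ℝ a p)
    (hV : DifferentiableAt ℝ V p) :
    curl3 (fun q => a q • V q) p = a p • curl3 V p + cross3 (grad a p) (V p) := by
  ext i
  fin_cases i <;>
  · simp only [curl3, pd_smul ha hV, cross3, cross_apply, grad, Pi.add_apply, Pi.smul_apply,
      smul_eq_mul, Matrix.smul_cons, Matrix.smul_empty, Fin.isValue, Fin.zero_eta, Fin.mk_one,
      Fin.reduceFinMk, Matrix.cons_val_zero, Matrix.cons_val_one, Matrix.cons_val]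
    ring

theorem curl3_grad {f : Pt → ℝ} (hf : ContDiffAt ℝ 2 f p) : curl3 (grad f) p = 0 := by
  ext i
  fin_cases i <;>
  · simp only [curl3, pd_apply hf.differentiableAt_grad]
    simp only [grad, pd]
    simpa [sub_eq_zero] using fderiv_fderiv_apply_comm hf _ _

theorem ContDiffAt.differentiableAt_div3 {u : Pt → Fin 3 → ℝ} (hu : ContDiffAt ℝ 2 u p) :
    DifferentiableAt ℝ (div3 u) p :=
  .fun_sum fun _ _ => differentiableAt_pi.1 (hu.differentiableAt_fderiv_apply _) _

theorem curl3_cross3_cross3_grad {u : Pt → Fin 3 → ℝ} {f θ : Pt → ℝ}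
    (hu : DifferentiableAt ℝ u p) (hf : ContDiffAt ℝ 2 f p) (hθ : ContDiffAt ℝ 2 θ p) :
    curl3 (fun q => cross3 (u q) (cross3 (grad f q) (grad θ q))) p
      = -(cross3 (grad (fun q => dot3 (u q) (grad f q)) p) (grad θ p)
          + cross3 (grad f p) (grad (fun q => dot3 (u q) (grad θ q)) p)) := by
  have hbac : (fun q => cross3 (u q) (cross3 (grad f q) (grad θ q)))
      = fun q => dot3 (u q) (grad θ q) • grad f q - dot3 (u q) (grad f q) • grad θ q := by
    funext q
    rw [cross3, cross3, cross_cross_eq_smul_sub_smul', dotProduct_comm (grad f q)]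
    rfl
  have ha := hu.dot3 hθ.differentiableAt_grad
  have hb := hu.dot3 hf.differentiableAt_grad
  rw [hbac, curl3_sub (ha.fun_smul hf.differentiableAt_grad) (hb.fun_smul hθ.differentiableAt_grad),
    curl3_smul ha hf.differentiableAt_grad, curl3_smul hb hθ.differentiableAt_grad, curl3_grad hf,
    curl3_grad hθ]
  simp only [cross3, smul_zero, zero_add]
  rw [← cross_anticomm (grad f p)]
  abel

end VectorCalculus

theorem matD_eq_pt_add_dot3 (u : Pt → Fin 3 → ℝ) (f : Pt → ℝ) (p : Pt) :
    matD u f p = pt f p + dot3 (u p) (grad f p) := by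
  simp [matD, dot3, grad]

theorem matD_comp {Q : ℝ → ℝ} {f : Pt → ℝ} {p : Pt} (u : Pt → Fin 3 → ℝ)
    (hQ : DifferentiableAt ℝ Q (f p)) (hf : DifferentiableAt ℝ f p) :
    matD u (fun q => Q (f q)) p = deriv Q (f p) * matD u f p := by
  have hchain : fderiv ℝ (fun q => Q (f q)) p = deriv Q (f p) • fderiv ℝ f p :=
    (hQ.hasDerivAt.comp_hasFDerivAt p hf.hasFDerivAt).fderiv
  simp [matD, pt, pd, hchain, mul_add, Finset.mul_sum, mul_left_comm]

/-- **Stretching equation for `B := ∇Q(q) × ∇θ`.** If `Dθ/Dt = 0` and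
`∂q/∂t + u·∇q + q div u = 0` everywhere, then
`∂B/∂t − curl(u × B) = −∇(q Q′(q) div u) × ∇θ` everywhere. -/
theorem B_stretching_equation
    (u : Pt → Fin 3 → ℝ) (θ qf : Pt → ℝ) (Q : ℝ → ℝ)
    (hu : ContDiff ℝ 2 u) (hθ : ContDiff ℝ 2 θ) (hq : ContDiff ℝ 2 qf)
    (hQ : ContDiff ℝ 2 Q)
    (hθeq : ∀ p, matD u θ p = 0)
    (hqeq : ∀ p, pt qf p + dot3 (u p) (grad qf p) + qf p * div3 u p = 0)
    (B : Pt → Fin 3 → ℝ)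
    (hBdef : ∀ p, B p = cross3 (grad (fun r => Q (qf r)) p) (grad θ p))
    (p : Pt) :
    pt B p - curl3 (fun q => cross3 (u q) (B q)) p
      = -cross3 (grad (fun q => qf q * deriv Q (qf q) * div3 u q) p) (grad θ p) := by
  obtain rfl : B = fun q => cross3 (grad (fun r => Q (qf r)) q) (grad θ q) := funext hBdef
  have hg : ContDiff ℝ 2 (fun r => Q (qf r)) := hQ.comp hq
  have hptθ : pt θ = fun q => -dot3 (u q) (grad θ q) := funext fun q => by
    linear_combination (matD_eq_pt_add_dot3 u θ q).symm.trans (hθeq q)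
  have hptg : pt (fun r => Q (qf r)) = fun q =>
      -dot3 (u q) (grad (fun r => Q (qf r)) q) - qf q * deriv Q (qf q) * div3 u q := by
    funext q
    have hmat :=
      matD_comp u (hQ.differentiable two_ne_zero (qf q)) (hq.differentiable two_ne_zero q)
    rw [matD_eq_pt_add_dot3, matD_eq_pt_add_dot3] at hmat
    linear_combination hmat + deriv Q (qf q) * hqeq q
  have hup := hu.differentiable two_ne_zero p
  have hadv : DifferentiableAt ℝ (fun q => -dot3 (u q) (grad (fun r => Q (qf r)) q)) p :=
    (hup.dot3 hg.contDiffAt.differentiableAt_grad).neg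
  have hw : DifferentiableAt ℝ (fun q => qf q * deriv Q (qf q) * div3 u q) p := by
    have hq' := hq.differentiable two_ne_zero
    have hQ' : Differentiable ℝ (deriv Q) :=
      (contDiff_succ_iff_deriv.1 hQ).2.2.differentiable one_ne_zero
    have hdiv := hu.contDiffAt.differentiableAt_div3 (p := p)
    fun_prop
  rw [pt_cross3 hg.contDiffAt.differentiableAt_grad hθ.contDiffAt.differentiableAt_grad,
    pt_grad hg.contDiffAt, pt_grad hθ.contDiffAt, hptg, hptθ,
    curl3_cross3_cross3_grad hup hg.contDiffAt hθ.contDiffAt, grad_sub hadv hw, grad_neg, grad_neg]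
  simp only [cross3, map_sub, map_neg, LinearMap.sub_apply, LinearMap.neg_apply]
  abel
end
end

section
/- Let B : ℝ → ℝ³ be twice differentiable with B(t) ≠ 0 for all t, set a := Ḃ, b := ä = B̈, B̂ := B/|B|, and define α_a := |B|⁻¹(B̂·a), χ_a := |B|⁻¹(B̂ × a), α_b := |B|⁻¹(B̂·b), χ_b := |B|⁻¹(B̂ × b). Then the component Riccati equations hold for all t: α̇_a = |χ_a|² − α_a² + α_b and χ̇_a = −2 α_a χ_a + χ_b. -/
open scoped BigOperators

noncomputable section

/-- Euclidean norm on `ℝ³`. -/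
noncomputable def norm3 (a : Fin 3 → ℝ) : ℝ := Real.sqrt (∑ i, a i ^ 2)

/-- The unit vector `B̂ := B/|B|` along a curve `B : ℝ → ℝ³`. -/
noncomputable def Bhat (B : ℝ → Fin 3 → ℝ) (t : ℝ) : Fin 3 → ℝ :=
  (norm3 (B t))⁻¹ • B t

/-- The growth rate `α_a := |B|⁻¹ (B̂·Ḃ)`. -/
noncomputable def αa (B : ℝ → Fin 3 → ℝ) (t : ℝ) : ℝ :=
  (norm3 (B t))⁻¹ * dot3 (Bhat B t) (deriv B t)

/-- The swing rate `χ_a := |B|⁻¹ (B̂ × Ḃ)`. -/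
noncomputable def χa (B : ℝ → Fin 3 → ℝ) (t : ℝ) : Fin 3 → ℝ :=
  (norm3 (B t))⁻¹ • cross3 (Bhat B t) (deriv B t)

/-- `α_b := |B|⁻¹ (B̂·B̈)`. -/
noncomputable def αb (B : ℝ → Fin 3 → ℝ) (t : ℝ) : ℝ :=
  (norm3 (B t))⁻¹ * dot3 (Bhat B t) (deriv (deriv B) t)

/-- `χ_b := |B|⁻¹ (B̂ × B̈)`. -/
noncomputable def χb (B : ℝ → Fin 3 → ℝ) (t : ℝ) : Fin 3 → ℝ :=
  (norm3 (B t))⁻¹ • cross3 (Bhat B t) (deriv (deriv B) t)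

/-- The unit vector `χ̂_a := χ_a/|χ_a|`. -/
noncomputable def χahat (B : ℝ → Fin 3 → ℝ) (t : ℝ) : Fin 3 → ℝ :=
  (norm3 (χa B t))⁻¹ • χa B t

/-- `c_b := B̂·(χ̂_a × χ_b)`. -/
noncomputable def cb (B : ℝ → Fin 3 → ℝ) (t : ℝ) : ℝ :=
  dot3 (Bhat B t) (cross3 (χahat B t) (χb B t))

/-- The Darboux angular velocity vector `D_a := χ_a + (c_b/|χ_a|) B̂`. -/
noncomputable def Da (B : ℝ → Fin 3 → ℝ) (t : ℝ) : Fin 3 → ℝ :=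
  χa B t + (cb B t * (norm3 (χa B t))⁻¹) • Bhat B t

/-! With `q := B ⬝ᵥ B`, the two factors `|B|⁻¹` combine to `α_a = q⁻¹ (B ⬝ᵥ Ḃ)` and
`χ_a = q⁻¹ (B ⨯₃ Ḃ)`, while `q̇ = 2 (B ⬝ᵥ Ḃ)`. Differentiating these quotients, `Ḃ ⨯₃ Ḃ = 0`
gives the equation for `χ_a`, and Lagrange's identity `|B ⨯₃ Ḃ|² = q |Ḃ|² - (B ⬝ᵥ Ḃ)²` turns
the term `q⁻¹ |Ḃ|²` in `α̇_a` into `|χ_a|² + α_a²`. -/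

open Matrix

section Derivatives

variable {𝕜 : Type*} [NontriviallyNormedField 𝕜] [CompleteSpace 𝕜] {t : 𝕜}

theorem HasDerivAt.dotProduct {n : Type*} [Fintype n] {u v : 𝕜 → n → 𝕜} {u' v' : n → 𝕜}
    (hu : HasDerivAt u u' t) (hv : HasDerivAt v v' t) :
    HasDerivAt (fun s => u s ⬝ᵥ v s) (u' ⬝ᵥ v t + u t ⬝ᵥ v') t := by
  rw [add_comm]
  exact (dotProductBilin 𝕜 𝕜 : (n → 𝕜) →ₗ[𝕜] _ →ₗ[𝕜] 𝕜).toContinuousBilinearMap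
    |>.hasDerivAt_of_bilinear (fun _ => hu) (fun _ => hv)

theorem HasDerivAt.crossProduct {u v : 𝕜 → Fin 3 → 𝕜} {u' v' : Fin 3 → 𝕜}
    (hu : HasDerivAt u u' t) (hv : HasDerivAt v v' t) :
    HasDerivAt (fun s => u s ⨯₃ v s) (u' ⨯₃ v t + u t ⨯₃ v') t := by
  rw [add_comm]
  exact (_root_.crossProduct (R := 𝕜)).toContinuousBilinearMap.hasDerivAt_of_bilinear
    (fun _ => hu) (fun _ => hv)

end Derivatives

theorem dot3_eq_dotProduct (x y : Fin 3 → ℝ) : dot3 x y = x ⬝ᵥ y := rfl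

theorem norm3_sq (x : Fin 3 → ℝ) : norm3 x ^ 2 = x ⬝ᵥ x := by
  rw [norm3, Real.sq_sqrt (by positivity)]
  simp only [dotProduct, sq]

theorem inv_norm3_mul_inv_norm3 (x : Fin 3 → ℝ) : (norm3 x)⁻¹ * (norm3 x)⁻¹ = (x ⬝ᵥ x)⁻¹ := by
  rw [← mul_inv, ← sq, norm3_sq]

theorem inv_norm3_mul_dot3_Bhat (B : ℝ → Fin 3 → ℝ) (t : ℝ) (y : Fin 3 → ℝ) :
    (norm3 (B t))⁻¹ * dot3 (Bhat B t) y = (B t ⬝ᵥ B t)⁻¹ * (B t ⬝ᵥ y) := by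
  rw [Bhat, dot3_eq_dotProduct, smul_dotProduct, smul_eq_mul, ← mul_assoc, inv_norm3_mul_inv_norm3]

theorem inv_norm3_smul_cross3_Bhat (B : ℝ → Fin 3 → ℝ) (t : ℝ) (y : Fin 3 → ℝ) :
    (norm3 (B t))⁻¹ • cross3 (Bhat B t) y = (B t ⬝ᵥ B t)⁻¹ • (B t ⨯₃ y) := by
  rw [Bhat, cross3, map_smul, LinearMap.smul_apply, smul_smul, inv_norm3_mul_inv_norm3]

section Riccati

variable {B : ℝ → Fin 3 → ℝ} {t : ℝ}

theorem hasDerivAt_inv_dotProduct_self (hB : DifferentiableAt ℝ B t) (hne : B t ≠ 0) :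
    HasDerivAt (fun s => (B s ⬝ᵥ B s)⁻¹)
      (-(2 * (B t ⬝ᵥ deriv B t)) / (B t ⬝ᵥ B t) ^ 2) t := by
  have hq : B t ⬝ᵥ B t ≠ 0 := dotProduct_self_eq_zero.not.mpr hne
  refine ((hB.hasDerivAt.dotProduct hB.hasDerivAt).inv hq).congr_deriv ?_
  rw [dotProduct_comm (deriv B t), two_mul]

theorem hasDerivAt_αa (hB : DifferentiableAt ℝ B t) (ha : DifferentiableAt ℝ (deriv B) t)
    (hne : B t ≠ 0) :
    HasDerivAt (αa B) (norm3 (χa B t) ^ 2 - αa B t ^ 2 + αb B t) t := by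
  have hq : B t ⬝ᵥ B t ≠ 0 := dotProduct_self_eq_zero.not.mpr hne
  have h := (hasDerivAt_inv_dotProduct_self hB hne).mul (hB.hasDerivAt.dotProduct ha.hasDerivAt)
  refine (h.congr_of_eventuallyEq (.of_eq (funext fun s =>
    inv_norm3_mul_dot3_Bhat B s (deriv B s)))).congr_deriv ?_
  rw [αa, αb, χa, inv_norm3_mul_dot3_Bhat, inv_norm3_mul_dot3_Bhat, inv_norm3_smul_cross3_Bhat,
    norm3_sq, smul_dotProduct, dotProduct_smul, cross_dot_cross]
  simp only [smul_eq_mul, dotProduct_comm (deriv B t) (B t)]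
  field_simp
  ring

theorem hasDerivAt_χa (hB : DifferentiableAt ℝ B t) (ha : DifferentiableAt ℝ (deriv B) t)
    (hne : B t ≠ 0) :
    HasDerivAt (χa B) (-(2 * αa B t) • χa B t + χb B t) t := by
  have h := (hasDerivAt_inv_dotProduct_self hB hne).smul (hB.hasDerivAt.crossProduct ha.hasDerivAt)
  refine (h.congr_of_eventuallyEq (.of_eq (funext fun s =>
    inv_norm3_smul_cross3_Bhat B s (deriv B s)))).congr_deriv ?_
  rw [αa, χa, χb, inv_norm3_mul_dot3_Bhat, inv_norm3_smul_cross3_Bhat, inv_norm3_smul_cross3_Bhat,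
    cross_self, zero_add]
  module

end Riccati

/-- **Component Riccati equations.** For a twice differentiable nonvanishing curve
`B` with `a := Ḃ`, `b := B̈`, the quantities `α_a, χ_a, α_b, χ_b` satisfy
`α̇_a = |χ_a|² − α_a² + α_b` and `χ̇_a = −2 α_a χ_a + χ_b` for all `t`. -/
theorem riccati_components (B : ℝ → Fin 3 → ℝ)
    (hB : Differentiable ℝ B) (hB' : Differentiable ℝ (deriv B))
    (hne : ∀ t, B t ≠ 0) (t : ℝ) :
    HasDerivAt (fun s => αa B s) (norm3 (χa B t) ^ 2 - αa B t ^ 2 + αb B t) t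
      ∧ HasDerivAt (fun s => χa B s) (-(2 * αa B t) • χa B t + χb B t) t := by
  exact ⟨hasDerivAt_αa (hB t) (hB' t) (hne t), hasDerivAt_χa (hB t) (hB' t) (hne t)⟩
end
end
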